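/- arXiv:1408.0145 — 2 statements merged into one kernel-verified Lean document; each statement's English description precedes it below -/
import Mathlib

section
/- Let W be an orthogonal matrix and Λ a diagonal matrix with Λ² = I. If M := H Wᵀ Λ is symmetric and positive definite for a given invertible matrix H, then (H Hᵀ)^{-1/2} H = Λ W. -/
open Matrix

section

open scoped ComplexOrder

/-- The positive semidefinite square root of a positive semidefinite matrix
(the definition of Mathlib of December 2024, since removed). -/
noncomputable def Matrix.PosSemidef.sqrt {𝕜 : Type*} [RCLike 𝕜] {n : Type*} [Fintype n]
    [DecidableEq n] {A : Matrix n n 𝕜} (hA : A.PosSemidef) : Matrix n n 𝕜 :=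
  hA.1.eigenvectorUnitary.1 * diagonal ((↑) ∘ (√·) ∘ hA.1.eigenvalues) *
  (star hA.1.eigenvectorUnitary : Matrix n n 𝕜)

end

/-! `M = H Wᵀ Λ` is symmetric and `Wᵀ Λ` is orthogonal, so `M² = M Mᵀ = H Hᵀ`; by uniqueness of
the positive semidefinite square root, `M = (H Hᵀ)^{1/2}`, and then
`(H Hᵀ)^{-1/2} H = M⁻¹ (M (Wᵀ Λ)ᵀ) = Λ W`. -/

namespace Matrix

variable {n : Type*} [Fintype n] [DecidableEq n]

section Sqrt

open scoped ComplexOrder MatrixOrder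

variable {𝕜 : Type*} [RCLike 𝕜]

theorem PosSemidef.sqrt_eq_cfcSqrt {A : Matrix n n 𝕜} (hA : A.PosSemidef) :
    hA.sqrt = CFC.sqrt A := by
  rw [CFC.sqrt_eq_cfc, cfc_nnreal_eq_real _ A, hA.1.cfc_eq]
  simp only [IsHermitian.cfc, Unitary.conjStarAlgAut_apply, PosSemidef.sqrt]
  congr 3
  funext i
  simp [Real.coe_toNNReal', max_eq_left (hA.eigenvalues_nonneg i)]

theorem PosSemidef.sqrt_eq_of_sq_eq {A M : Matrix n n 𝕜} (hA : A.PosSemidef)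
    (hM : M.PosSemidef) (h : M ^ 2 = A) : hA.sqrt = M := by
  rw [hA.sqrt_eq_cfcSqrt]
  exact CFC.sqrt_unique (by rw [← pow_two, h]) hM.nonneg

end Sqrt

variable {R : Type*} [CommRing R]

theorem IsSymm.sq_eq_mul_transpose {H U : Matrix n n R} (hU : U * Uᵀ = 1)
    (hsymm : (H * U).IsSymm) : (H * U) ^ 2 = H * Hᵀ := by
  conv_lhs => rw [pow_two]; arg 2; rw [← hsymm.eq]
  rw [transpose_mul, Matrix.mul_assoc, ← Matrix.mul_assoc U, hU, Matrix.one_mul]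

theorem nonsing_inv_mul_eq_transpose {H U : Matrix n n R} (hU : U * Uᵀ = 1)
    (hHU : IsUnit (H * U).det) : (H * U)⁻¹ * H = Uᵀ := by
  calc (H * U)⁻¹ * H = (H * U)⁻¹ * (H * U * Uᵀ) := by
        rw [Matrix.mul_assoc H, hU, Matrix.mul_one]
    _ = Uᵀ := nonsing_inv_mul_cancel_left _ _ hHU

theorem diagonal_mul_self_eq_one {l : n → R} (hl : ∀ i, l i = 1 ∨ l i = -1) :
    diagonal l * diagonal l = 1 := by
  rw [diagonal_mul_diagonal, ← diagonal_one]
  congr 1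
  funext i
  rcases hl i with h | h <;> simp [h]

end Matrix

theorem stmt5_general {d : ℕ} (W H : Matrix (Fin d) (Fin d) ℝ) (hW : W * Wᵀ = 1)
    (l : Fin d → ℝ) (hl : ∀ i, l i = 1 ∨ l i = -1)
    (hPD : (H * Hᵀ).PosDef)
    (hsymm : (H * Wᵀ * Matrix.diagonal l).IsSymm)
    (hpos : (H * Wᵀ * Matrix.diagonal l).PosDef) :
    hPD.posSemidef.sqrt⁻¹ * H = Matrix.diagonal l * W := by
  set U := Wᵀ * diagonal l
  have hU : U * Uᵀ = 1 := by
    rw [transpose_mul, diagonal_transpose, transpose_transpose, Matrix.mul_assoc,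
      ← Matrix.mul_assoc (diagonal l), diagonal_mul_self_eq_one hl, Matrix.one_mul,
      mul_eq_one_comm.mp hW]
  rw [Matrix.mul_assoc] at hsymm hpos
  rw [hPD.posSemidef.sqrt_eq_of_sq_eq hpos.posSemidef (hsymm.sq_eq_mul_transpose hU),
    nonsing_inv_mul_eq_transpose hU ((isUnit_iff_isUnit_det _).mp hpos.isUnit),
    transpose_mul, diagonal_transpose, transpose_transpose]

/-- If `W` is orthogonal, `Λ = diag l` with `l i = ±1`, `H` invertible and
`M = H Wᵀ Λ` is symmetric positive definite, then `(H Hᵀ)^{-1/2} H = Λ W`. -/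
theorem stmt5 {d : ℕ} (W H : Matrix (Fin d) (Fin d) ℝ) (hW : W * Wᵀ = 1)
    (l : Fin d → ℝ) (hl : ∀ i, l i = 1 ∨ l i = -1)
    (hH : IsUnit H.det) (hPD : (H * Hᵀ).PosDef)
    (hsymm : (H * Wᵀ * Matrix.diagonal l).IsSymm)
    (hpos : (H * Wᵀ * Matrix.diagonal l).PosDef) :
    hPD.posSemidef.sqrt⁻¹ * H = Matrix.diagonal l * W :=
  stmt5_general W H hW l hl hPD hsymm hpos
end

section
/- Let W be an orthogonal matrix, Λ diagonal with Λ² = I, and H an invertible matrix such that (H Hᵀ)^{-1/2} H = Λ W. Then H Wᵀ Λ is symmetric and positive definite. -/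
open Matrix

open scoped ComplexOrder in
/-- The square root of a positive semidefinite matrix, as `Matrix.PosSemidef.sqrt` was defined
in the older Mathlib (removed since). -/
noncomputable def posSemidefSqrtOld {n 𝕜 : Type*} [Fintype n] [RCLike 𝕜] [DecidableEq n]
    {A : Matrix n n 𝕜} (hA : A.PosSemidef) : Matrix n n 𝕜 :=
  hA.1.eigenvectorUnitary.1 * diagonal (fun i => ((hA.1.eigenvalues i).sqrt : 𝕜)) *
    (star hA.1.eigenvectorUnitary : Matrix n n 𝕜)

/-! Writing `S = (H Hᵀ)^{1/2}`, the hypothesis says `H = S Λ W`; as `W Wᵀ = 1` and `Λ² = 1`,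
this gives `H Wᵀ Λ = S`, which is positive definite because the eigenvalues of `H Hᵀ` are. -/

open scoped ComplexOrder in
theorem posSemidefSqrtOld_posDef {n 𝕜 : Type*} [Fintype n] [RCLike 𝕜] [DecidableEq n]
    {A : Matrix n n 𝕜} (hA : A.PosDef) : (posSemidefSqrtOld hA.posSemidef).PosDef := by
  rw [posSemidefSqrtOld, IsUnit.posDef_star_right_conjugate_iff Unitary.isUnit_coe]
  exact .diagonal fun i => by simpa using hA.eigenvalues_pos i

theorem diagonal_mul_self_eq_one_of_forall_eq_one_or_eq_neg_one {n R : Type*} [Fintype n] [DecidableEq n] [Ring R]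
    {l : n → R} (hl : ∀ i, l i = 1 ∨ l i = -1) : diagonal l * diagonal l = 1 := by
  rw [diagonal_mul_diagonal, ← diagonal_one]
  congr 1
  funext i
  rcases hl i with h | h <;> simp [h]

theorem mul_transpose_mul_eq_of_inv_mul_eq {n R : Type*} [Fintype n] [DecidableEq n] [CommRing R]
    {S H D W : Matrix n n R} (hS : IsUnit S.det) (hW : W * Wᵀ = 1) (hD : D * D = 1)
    (h : S⁻¹ * H = D * W) : H * Wᵀ * D = S := by
  have hH : H = S * (D * W) := by rw [← h, mul_nonsing_inv_cancel_left _ _ hS]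
  calc H * Wᵀ * D = S * (D * (W * Wᵀ) * D) := by simp only [hH, Matrix.mul_assoc]
    _ = S := by rw [hW, Matrix.mul_one, hD, Matrix.mul_one]

theorem stmt6_general {d : ℕ} (W H : Matrix (Fin d) (Fin d) ℝ) (hW : W * Wᵀ = 1)
    (l : Fin d → ℝ) (hl : ∀ i, l i = 1 ∨ l i = -1)
    (hPD : (H * Hᵀ).PosDef)
    (hfix : (posSemidefSqrtOld hPD.posSemidef)⁻¹ * H = Matrix.diagonal l * W) :
    (H * Wᵀ * Matrix.diagonal l).IsSymm ∧ (H * Wᵀ * Matrix.diagonal l).PosDef := by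
  have hS := posSemidefSqrtOld_posDef hPD
  rw [mul_transpose_mul_eq_of_inv_mul_eq ((isUnit_iff_isUnit_det _).mp hS.isUnit) hW
    (diagonal_mul_self_eq_one_of_forall_eq_one_or_eq_neg_one hl) hfix]
  exact ⟨isHermitian_iff_isSymm.mp hS.isHermitian, hS⟩

/-- If `W` is orthogonal, `Λ = diag l` with `l i = ±1`, `H` invertible and
`(H Hᵀ)^{-1/2} H = Λ W`, then `H Wᵀ Λ` is symmetric and positive definite. -/
theorem stmt6 {d : ℕ} (W H : Matrix (Fin d) (Fin d) ℝ) (hW : W * Wᵀ = 1)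
    (l : Fin d → ℝ) (hl : ∀ i, l i = 1 ∨ l i = -1)
    (hH : IsUnit H.det) (hPD : (H * Hᵀ).PosDef)
    (hfix : (posSemidefSqrtOld hPD.posSemidef)⁻¹ * H = Matrix.diagonal l * W) :
    (H * Wᵀ * Matrix.diagonal l).IsSymm ∧ (H * Wᵀ * Matrix.diagonal l).PosDef :=
  stmt6_general W H hW l hl hPD hfix
end
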